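/- Matrix-forest interpretation of the adjugate: for an N×N matrix G with augmented digraph G†, the (n,n) entry of the adjugate of -G (equivalently (-1)^{N-1} times the (n,n) cofactor of G) equals Σ_{F ∈ F_{{†,n}}} π_F, the signless sum of arc-weight products over all two-tree spanning forests of G† rooted at † and n. -/

import Mathlib

open scoped Classical
open Finset

noncomputable section

/-- The step relation of an out-neighbor map: there is an arc from `a` to `b`. -/
def FStep {V : Type*} (f : V → Option V) (a b : V) : Prop := f a = some b

/-- A forest: a digraph in which every vertex has out-degree ≤ 1 (encoded by the
out-neighbor map `f`) and which has no directed circuits. -/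
def IsForest {V : Type*} (f : V → Option V) : Prop :=
  ∀ v, ¬ Relation.TransGen (FStep f) v v

/-- The roots of a forest: vertices of out-degree 0.  For a forest, the number of
trees (connected components) equals the number of roots. -/
def roots {V : Type*} [Fintype V] (f : V → Option V) : Finset V :=
  Finset.univ.filter (fun v => f v = none)

/-- `Reach f a b`: the directed path out of `a` (following arcs) passes through `b`. -/
def Reach {V : Type*} (f : V → Option V) (a b : V) : Prop :=
  Relation.ReflTransGen (FStep f) a b

/-- The productivity π_F of a forest: product of the weights of its arcs. -/
def forestProd {V K : Type*} [Fintype V] [CommRing K] (w : V → V → K)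
    (f : V → Option V) : K :=
  ∏ v, (match f v with | some u => w v u | none => 1)

/-- Arc weights of the augmented digraph G† on vertex set `Option (Fin N)`,
where `none` plays the role of the extra vertex †: arcs (i,j), i ≠ j, have
weight g_ij, arcs (i,†) have weight -Σ_j g_ij; there are no loops and no
arcs out of †. -/
def daggerWeight {N : ℕ} {K : Type*} [CommRing K] (G : Matrix (Fin N) (Fin N) K) :
    Option (Fin N) → Option (Fin N) → K
  | some i, some j => if i = j then 0 else G i j
  | some i, none => -(∑ j, G i j)
  | none, _ => 0

/-!
Write `-G` as the Laplacian `L = D - A` of `G†` with the sink `†` deleted: row `i` of `L` is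
`∑ u, g_{iu} (e_i - e_u)` with `e_† = 0`. Replacing row `n` by `e_n`, which computes the
cofactor, gives the Laplacian of the same weights except that `n` keeps a single arc, to `†`,
of weight `1`. Expanding the determinant multilinearly along the rows gives
`∑ π_g det (I - A_g)` over all out-neighbour maps `g`. Here `det (I - A_g) = 1` if `g` is
acyclic, since only the identity permutation survives in the Leibniz expansion, and `0`
otherwise, since the rows of the vertices on cycles add up to zero. Hence the cofactor is the
sum of `π` over the spanning trees rooted at `†` that use the arc `n → †`, and deleting that
arc turns these into the two-tree forests rooted at `†` and `n`.
-/

open Matrix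

theorem perm_eq_one_of_isForest {V : Type*} [Finite V] {g : V → Option V} (hg : IsForest g)
    {σ : Equiv.Perm V} (hσ : ∀ i, σ i ≠ i → g i = some (σ i)) : σ = 1 := by
  by_contra hne
  obtain ⟨j, hj⟩ : ∃ j, σ j ≠ j := by
    by_contra! h
    exact hne (Equiv.ext h)
  have hmoved (k : ℕ) : σ ((σ ^ k) j) ≠ (σ ^ k) j := fun h => hj <| (σ ^ k).injective <| by
    rw [← Equiv.Perm.mul_apply, ← pow_succ, pow_succ', Equiv.Perm.mul_apply, h]
  have hpath (k : ℕ) : Relation.TransGen (FStep g) j ((σ ^ (k + 1)) j) := by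
    induction k with
    | zero => simpa [FStep] using .single (hσ j hj)
    | succ k ih =>
      refine ih.tail ?_
      rw [FStep, pow_succ' σ (k + 1), Equiv.Perm.mul_apply]
      exact hσ _ (hmoved _)
  have hcycle := hpath (orderOf σ - 1)
  rw [Nat.sub_add_cancel (orderOf_pos σ), pow_orderOf_eq_one] at hcycle
  exact hg j hcycle

lemma exists_succ_of_transGen_self {V : Type*} {g : V → Option V} {i : V}
    (h : Relation.TransGen (FStep g) i i) :
    ∃ j, g i = some j ∧ Relation.TransGen (FStep g) j j := by
  obtain ⟨j, hij, hji⟩ := Relation.TransGen.head'_iff.mp h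
  exact ⟨j, hij, .tail' hji hij⟩

lemma exists_pred_of_transGen_self {V : Type*} {g : V → Option V} {j : V}
    (h : Relation.TransGen (FStep g) j j) :
    ∃ i, g i = some j ∧ Relation.TransGen (FStep g) i i := by
  obtain ⟨i, hji, hij⟩ := Relation.TransGen.tail'_iff.mp h
  exact ⟨i, hij, .head' hij hji⟩

section ArcMatrix

variable {V K : Type*} [DecidableEq V] [CommRing K]

def arcRow (i : V) (u : Option V) : V → K :=
  Pi.single i 1 - u.elim 0 fun j => Pi.single j 1

lemma arcRow_apply (i : V) (u : Option V) (j : V) :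
    (arcRow i u j : K) = (if j = i then 1 else 0) - if u = some j then 1 else 0 := by
  cases u <;> simp [arcRow, Pi.single_apply, eq_comm]

variable [Fintype V]

def arcMatrix (g : V → Option V) : Matrix V V K := Matrix.of fun i => arcRow i (g i)

theorem det_arcMatrix_of_isForest {g : V → Option V} (hg : IsForest g) :
    (arcMatrix g : Matrix V V K).det = 1 := by
  have hloop (i : V) : g i ≠ some i := fun h => hg i (.single h)
  rw [← det_transpose, det_apply', Finset.sum_eq_single 1]
  · simp [arcMatrix, arcRow_apply, hloop]
  · intro σ _ hσ
    suffices ∃ i, (arcMatrix g : Matrix V V K)ᵀ (σ i) i = 0 by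
      obtain ⟨i, hi⟩ := this
      rw [Finset.prod_eq_zero (f := fun j => (arcMatrix g : Matrix V V K)ᵀ (σ j) j)
        (Finset.mem_univ i) hi, mul_zero]
    by_contra! h
    refine hσ (perm_eq_one_of_isForest hg fun i hi => ?_)
    by_contra hgi
    exact h i (by simp [arcMatrix, arcRow_apply, hi, hgi])
  · simp

theorem det_arcMatrix_of_not_isForest {g : V → Option V} (hg : ¬ IsForest g) :
    (arcMatrix g : Matrix V V K).det = 0 := by
  obtain ⟨v, hv⟩ : ∃ v, Relation.TransGen (FStep g) v v := by simpa [IsForest] using hg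
  set C := Finset.univ.filter fun i => Relation.TransGen (FStep g) i i
  set s : V → V := fun i => (g i).getD i
  have hs (i : V) (hi : i ∈ C) : g i = some (s i) ∧ s i ∈ C := by
    obtain ⟨j, hij, hj⟩ := exists_succ_of_transGen_self (Finset.mem_filter.mp hi).2
    simp [s, hij, C, hj]
  have hmaps : Set.MapsTo s C C := fun i hi => (hs i hi).2
  have hsurj : Set.SurjOn s C C := fun j hj => by
    obtain ⟨i, hij, hi⟩ := exists_pred_of_transGen_self (Finset.mem_filter.mp hj).2
    exact ⟨i, by simp [C, hi], by simp [s, hij]⟩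
  -- the arcs leaving the cycles of `g` permute them, so those rows of `arcMatrix g` cancel
  have hrows : ∑ i ∈ C, (arcRow i (g i) : V → K) = 0 := by
    have hperm : ∑ i ∈ C, (Pi.single (s i) 1 : V → K) = ∑ i ∈ C, Pi.single i 1 :=
      Finset.sum_nbij s hmaps (Finset.injOn_of_surjOn_of_card_le s hmaps hsurj le_rfl) hsurj
        fun _ _ => rfl
    rw [← sub_eq_zero.mpr hperm.symm, ← Finset.sum_sub_distrib]
    refine Finset.sum_congr rfl fun i hi => ?_
    simp only [arcRow, (hs i hi).1, Option.elim_some]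
  set c : V → K := fun i => if Relation.TransGen (FStep g) i i then 1 else 0
  have hcombination : ∑ i, c i • (arcMatrix g : Matrix V V K) i = 0 := by
    change ∑ i, c i • (arcRow i (g i) : V → K) = 0
    simp only [c, ite_smul, one_smul, zero_smul]
    rw [← Finset.sum_filter]
    exact hrows
  have := det_updateRow_sum (arcMatrix g : Matrix V V K) v c
  rw [hcombination, det_eq_zero_of_row_eq_zero v (by simp)] at this
  simpa [c, hv] using this.symm

end ArcMatrix

section SinkLaplacian

variable {V K : Type*} [Fintype V] [DecidableEq V] [CommRing K]

/-- `w i none` is the weight of the arc from `i` to the sink; loops `w i (some i)` cancel. -/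
def sinkLaplacian (w : V → Option V → K) : Matrix V V K :=
  diagonal (fun i => ∑ u, w i u) - of fun i j => w i (some j)

lemma sinkLaplacian_row (w : V → Option V → K) (i : V) :
    sinkLaplacian w i = ∑ u, w i u • arcRow i u := by
  funext j
  simp [sinkLaplacian, arcRow_apply, Finset.sum_apply, mul_sub, Finset.sum_sub_distrib,
    diagonal_apply, eq_comm]

theorem det_sinkLaplacian (w : V → Option V → K) :
    (sinkLaplacian w).det = ∑ g ∈ Finset.univ.filter IsForest, ∏ i, w i (g i) := by
  have hexpand :
      (sinkLaplacian w).det = ∑ g : V → Option V, (∏ i, w i (g i)) * (arcMatrix g).det := by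
    calc (sinkLaplacian w).det = detRowAlternating fun i => ∑ u, w i u • arcRow i u :=
          congrArg detRowAlternating (funext (sinkLaplacian_row w))
      _ = ∑ g : V → Option V, detRowAlternating fun i => w i (g i) • arcRow i (g i) :=
          (detRowAlternating : (V → K) [⋀^V]→ₗ[K] K).toMultilinearMap.map_sum _
      _ = _ := by simp only [AlternatingMap.map_smul_univ, smul_eq_mul]; rfl
  rw [hexpand, Finset.sum_filter]
  refine Finset.sum_congr rfl fun g _ => ?_
  by_cases hg : IsForest g
  · simp [hg, det_arcMatrix_of_isForest]
  · simp [hg, det_arcMatrix_of_not_isForest]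

lemma sinkLaplacian_update_single_none (w : V → Option V → K) (n : V) :
    sinkLaplacian (Function.update w n (Pi.single none 1)) =
      (sinkLaplacian w).updateRow n (Pi.single n 1) := by
  ext i j
  rcases eq_or_ne i n with rfl | hi
  · simp [sinkLaplacian, diagonal_apply, Pi.single_apply, eq_comm]
  · simp [sinkLaplacian, diagonal_apply, hi]

end SinkLaplacian

lemma sinkLaplacian_daggerWeight {N : ℕ} {K : Type*} [CommRing K]
    (G : Matrix (Fin N) (Fin N) K) :
    sinkLaplacian (fun i => daggerWeight G (some i)) = -G := by
  ext i j
  have hoff : ∑ k, (if i = k then 0 else G i k) = ∑ k, G i k - G i i := by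
    calc ∑ k, (if i = k then 0 else G i k) = ∑ k, (G i k - if i = k then G i k else 0) :=
          Finset.sum_congr rfl fun k _ => by split_ifs <;> simp
      _ = _ := by simp [Finset.sum_sub_distrib]
  rcases eq_or_ne i j with rfl | hij
  · simp [sinkLaplacian, daggerWeight, Fintype.sum_option, hoff]
    ring
  · simp [sinkLaplacian, daggerWeight, hij]

section TwoTreeForests

variable {V : Type*} [DecidableEq V]

def detachFromSink (n : V) (g : V → Option V) : Option V → Option (Option V)
  | none => none
  | some i => if i = n then none else some (g i)

def attachToSink (f : Option V → Option (Option V)) : V → Option V :=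
  fun i => (f (some i)).join

lemma attachToSink_detachFromSink {n : V} {g : V → Option V} (hg : g n = none) :
    attachToSink (detachFromSink n g) = g := by
  funext i
  rcases eq_or_ne i n with rfl | hi <;> simp [attachToSink, detachFromSink, *]

omit [DecidableEq V] in
lemma exists_transGen_attachToSink {f : Option V → Option (Option V)} (hf : f none = none)
    {a : Option V} {j : V} (h : Relation.TransGen (FStep f) a (some j)) :
    ∃ i, a = some i ∧ Relation.TransGen (FStep (attachToSink f)) i j := by
  induction h using Relation.TransGen.head_induction_on with
  | @single a hab =>
    cases a with
    | none => simp [FStep, hf] at hab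
    | some i => exact ⟨i, rfl, .single (Option.join_eq_some_iff.mpr hab)⟩
  | @head a c hac _ ih =>
    obtain ⟨k, rfl, hk⟩ := ih
    cases a with
    | none => simp [FStep, hf] at hac
    | some i => exact ⟨i, rfl, .head (Option.join_eq_some_iff.mpr hac) hk⟩

omit [DecidableEq V] in
lemma isForest_attachToSink_iff {f : Option V → Option (Option V)} (hf : f none = none) :
    IsForest (attachToSink f) ↔ IsForest f := by
  refine ⟨fun h v hv => ?_, fun h i hi => ?_⟩
  · cases v with
    | none =>
      obtain ⟨b, hb, -⟩ := Relation.TransGen.head'_iff.mp hv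
      simp [FStep, hf] at hb
    | some j =>
      obtain ⟨_, ⟨⟩, hij⟩ := exists_transGen_attachToSink hf hv
      exact h j hij
  · exact h (some i) (hi.lift some fun _ _ hab => Option.join_eq_some_iff.mp hab)

lemma forestProd_detachFromSink [Fintype V] {K : Type*} [CommRing K]
    (w : Option V → Option V → K) (n : V) (g : V → Option V) :
    forestProd w (detachFromSink n g) = ∏ i, if i = n then 1 else w (some i) (g i) := by
  simp only [forestProd, Fintype.prod_option, detachFromSink, one_mul]
  refine Finset.prod_congr rfl fun i _ => ?_
  split_ifs <;> rfl

omit [DecidableEq V] in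
lemma mem_roots [Fintype V] {f : V → Option V} {v : V} : v ∈ roots f ↔ f v = none := by
  simp [roots]

variable [Fintype V]

lemma roots_detachFromSink (n : V) (g : V → Option V) :
    roots (detachFromSink n g) = {none, some n} := by
  ext v
  cases v <;> simp [mem_roots, detachFromSink]

lemma detachFromSink_attachToSink {n : V} {f : Option V → Option (Option V)}
    (hnone : f none = none) (hroots : roots f = {none, some n}) :
    detachFromSink n (attachToSink f) = f := by
  have hroot (i : V) : f (some i) = none ↔ i = n := by
    simpa [mem_roots] using Finset.ext_iff.mp hroots (some i)
  funext v
  cases v with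
  | none => exact hnone.symm
  | some i =>
    rcases eq_or_ne i n with rfl | hi
    · simp [detachFromSink, (hroot i).mpr rfl]
    · obtain ⟨u, hu⟩ := Option.ne_none_iff_exists'.mp (mt (hroot i).mp hi)
      simp [detachFromSink, attachToSink, hi, hu]

theorem sum_isForest_update_eq_sum_twoTreeForests {K : Type*} [CommRing K]
    (w : Option V → Option V → K) (n : V) :
    ∑ g ∈ Finset.univ.filter IsForest,
        ∏ i, Function.update (fun i => w (some i)) n (Pi.single none 1) i (g i) =
      ∑ f ∈ Finset.univ.filter (fun f : Option V → Option (Option V) =>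
          IsForest f ∧ f none = none ∧ roots f = {none, some n}),
        forestProd w f := by
  have hvanish (g : V → Option V) (hg : g n ≠ none) :
      ∏ i, Function.update (fun i => w (some i)) n (Pi.single none 1) i (g i) = 0 :=
    Finset.prod_eq_zero (Finset.mem_univ n) (by simp [hg])
  rw [← Finset.sum_filter_of_ne (p := fun g => g n = none)
    fun g _ h => not_not.mp (mt (hvanish g) h), Finset.filter_filter]
  refine Finset.sum_nbij' (detachFromSink n) attachToSink ?_ ?_ ?_ ?_ ?_
  · intro g hg
    obtain ⟨hforest, hgn⟩ := by simpa using hg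
    simp only [Finset.mem_filter, Finset.mem_univ, true_and]
    refine ⟨?_, rfl, roots_detachFromSink n g⟩
    rwa [← isForest_attachToSink_iff rfl, attachToSink_detachFromSink hgn]
  · intro f hf
    obtain ⟨hforest, hnone, hroots⟩ := by simpa using hf
    simp only [Finset.mem_filter, Finset.mem_univ, true_and]
    refine ⟨(isForest_attachToSink_iff hnone).mpr hforest, ?_⟩
    simp [attachToSink, mem_roots.mp (by simp [hroots] : some n ∈ roots f)]
  · intro g hg
    obtain ⟨-, hgn⟩ := by simpa using hg
    exact attachToSink_detachFromSink hgn
  · intro f hf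
    obtain ⟨-, hnone, hroots⟩ := by simpa using hf
    exact detachFromSink_attachToSink hnone hroots
  · intro g hg
    obtain ⟨-, hgn⟩ := by simpa using hg
    rw [forestProd_detachFromSink]
    refine Finset.prod_congr rfl fun i _ => ?_
    rcases eq_or_ne i n with rfl | hi
    · simp [hgn]
    · simp [hi]

end TwoTreeForests

/-- The (n,n) entry of the adjugate of -G equals the signless sum of forest
products over all two-tree spanning forests of G† rooted at † and n. -/
theorem stmt15 {N : ℕ} (G : Matrix (Fin N) (Fin N) ℂ) (n : Fin N) :
    Matrix.adjugate (-G) n n =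
      ∑ᶠ f ∈ {f : Option (Fin N) → Option (Option (Fin N)) |
          IsForest f ∧ f none = none ∧ roots f = {none, some n}},
        forestProd (daggerWeight G) f := by
  rw [adjugate_apply, ← sinkLaplacian_daggerWeight, ← sinkLaplacian_update_single_none,
    det_sinkLaplacian, sum_isForest_update_eq_sum_twoTreeForests, finsum_mem_eq_toFinset_sum,
    Set.toFinset_ofPred]
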